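/- arXiv:1407.1127 — 3 statements merged into one kernel-verified Lean document; each statement's English description precedes it below -/
import Mathlib

section
/- Let w : ℝ × ℝ → ℝ be a smooth biharmonic function (Δ(Δw) = 0 everywhere on ℝ²). Then there exist entire functions f, g : ℂ → ℂ such that w(x, y) = Re( conj(z)·f(z) + g(z) ) for all (x, y) ∈ ℝ², where z = x + i·y and conj(z) = x − i·y. -/
/-- Partial derivative in the first variable. -/
noncomputable def pdx (f : ℝ × ℝ → ℝ) : ℝ × ℝ → ℝ :=
  fun p => deriv (fun t => f (t, p.2)) p.1

/-- Partial derivative in the second variable. -/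
noncomputable def pdy (f : ℝ × ℝ → ℝ) : ℝ × ℝ → ℝ :=
  fun p => deriv (fun t => f (p.1, t)) p.2

/-- Laplacian of a function on the plane. -/
noncomputable def lap (f : ℝ × ℝ → ℝ) : ℝ × ℝ → ℝ :=
  fun p => pdx (pdx f) p + pdy (pdy f) p

open Complex Metric Filter



lemma hasDerivAt_slice_x {f : ℝ × ℝ → ℝ} {p : ℝ × ℝ} (hf : DifferentiableAt ℝ f p) :
    HasDerivAt (fun t => f (t, p.2)) (fderiv ℝ f p (1, 0)) p.1 := by
  have h1 : HasDerivAt (fun t : ℝ => (t, p.2)) ((1 : ℝ), (0 : ℝ)) p.1 :=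
    (hasDerivAt_id p.1).prodMk (hasDerivAt_const _ _)
  have h2 := hf.hasFDerivAt.comp_hasDerivAt p.1 h1
  simpa [Function.comp_def] using h2

lemma hasDerivAt_slice_y {f : ℝ × ℝ → ℝ} {p : ℝ × ℝ} (hf : DifferentiableAt ℝ f p) :
    HasDerivAt (fun t => f (p.1, t)) (fderiv ℝ f p (0, 1)) p.2 := by
  have h1 : HasDerivAt (fun t : ℝ => (p.1, t)) ((0 : ℝ), (1 : ℝ)) p.2 :=
    (hasDerivAt_const _ _).prodMk (hasDerivAt_id p.2)
  have h2 := hf.hasFDerivAt.comp_hasDerivAt p.2 h1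
  simpa [Function.comp_def] using h2

lemma pdx_eq {f : ℝ × ℝ → ℝ} {p : ℝ × ℝ} (hf : DifferentiableAt ℝ f p) :
    pdx f p = fderiv ℝ f p (1, 0) := (hasDerivAt_slice_x hf).deriv

lemma pdy_eq {f : ℝ × ℝ → ℝ} {p : ℝ × ℝ} (hf : DifferentiableAt ℝ f p) :
    pdy f p = fderiv ℝ f p (0, 1) := (hasDerivAt_slice_y hf).deriv

lemma contDiff_pdx {f : ℝ × ℝ → ℝ} (hf : ContDiff ℝ (⊤ : ℕ∞) f) : ContDiff ℝ (⊤ : ℕ∞) (pdx f) := by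
  have h : pdx f = fun p => fderiv ℝ f p (1, 0) :=
    funext fun p => pdx_eq (hf.differentiable (by simp) p)
  rw [h]
  exact (hf.fderiv_right (by simp)).clm_apply contDiff_const

lemma contDiff_pdy {f : ℝ × ℝ → ℝ} (hf : ContDiff ℝ (⊤ : ℕ∞) f) : ContDiff ℝ (⊤ : ℕ∞) (pdy f) := by
  have h : pdy f = fun p => fderiv ℝ f p (0, 1) :=
    funext fun p => pdy_eq (hf.differentiable (by simp) p)
  rw [h]
  exact (hf.fderiv_right (by simp)).clm_apply contDiff_const

lemma pdv_swap {f : ℝ × ℝ → ℝ} (hf : ContDiff ℝ (⊤ : ℕ∞) f) (p : ℝ × ℝ) (v u : ℝ × ℝ) :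
    fderiv ℝ (fderiv ℝ f) p u v = fderiv ℝ (fderiv ℝ f) p v u := by
  have hd : ∀ y, HasFDerivAt f (fderiv ℝ f y) y := fun y =>
    (hf.differentiable (by simp) y).hasFDerivAt
  have hd2 : HasFDerivAt (fderiv ℝ f) (fderiv ℝ (fderiv ℝ f) p) p :=
    ((hf.fderiv_right (m := (⊤ : ℕ∞)) (by simp)).differentiable (by simp) p).hasFDerivAt
  exact second_derivative_symmetric hd hd2 u v

lemma hasFDerivAt_fderiv_apply {f : ℝ × ℝ → ℝ} (hf : ContDiff ℝ (⊤ : ℕ∞) f) (p : ℝ × ℝ)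
    (v : ℝ × ℝ) :
    HasFDerivAt (fun q => fderiv ℝ f q v) ((fderiv ℝ (fderiv ℝ f) p).flip v) p := by
  have hd2 : HasFDerivAt (fderiv ℝ f) (fderiv ℝ (fderiv ℝ f) p) p :=
    ((hf.fderiv_right (m := (⊤ : ℕ∞)) (by simp)).differentiable (by simp) p).hasFDerivAt
  have h := hd2.clm_apply (hasFDerivAt_const v p)
  simpa using h

lemma fderiv_pdx_apply {f : ℝ × ℝ → ℝ} (hf : ContDiff ℝ (⊤ : ℕ∞) f) (p v : ℝ × ℝ) :
    fderiv ℝ (pdx f) p v = fderiv ℝ (fderiv ℝ f) p v (1, 0) := by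
  have he : pdx f = fun q => fderiv ℝ f q (1, 0) :=
    funext fun q => pdx_eq (hf.differentiable (by simp) q)
  rw [he, (hasFDerivAt_fderiv_apply hf p (1, 0)).fderiv]
  rfl

lemma fderiv_pdy_apply {f : ℝ × ℝ → ℝ} (hf : ContDiff ℝ (⊤ : ℕ∞) f) (p v : ℝ × ℝ) :
    fderiv ℝ (pdy f) p v = fderiv ℝ (fderiv ℝ f) p v (0, 1) := by
  have he : pdy f = fun q => fderiv ℝ f q (0, 1) :=
    funext fun q => pdy_eq (hf.differentiable (by simp) q)
  rw [he, (hasFDerivAt_fderiv_apply hf p (0, 1)).fderiv]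
  rfl

lemma hasDerivAt_ofReal (t : ℝ) : HasDerivAt (fun s : ℝ => (s : ℂ)) 1 t := by
  exact Complex.ofRealCLM.hasDerivAt (x := t)

lemma sliceX_hasDerivAt {F : ℂ → ℂ} (hF : Differentiable ℂ F) (x y : ℝ) :
    HasDerivAt (fun t : ℝ => F (↑t + ↑y * I)) (deriv F (↑x + ↑y * I)) x := by
  have hz : HasDerivAt (fun t : ℝ => (↑t + ↑y * I : ℂ)) 1 x :=
    (hasDerivAt_ofReal x).add_const _
  simpa [Function.comp_def] using ((hF _).hasDerivAt.scomp x hz)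

lemma sliceY_hasDerivAt {F : ℂ → ℂ} (hF : Differentiable ℂ F) (x y : ℝ) :
    HasDerivAt (fun t : ℝ => F (↑x + ↑t * I)) (I * deriv F (↑x + ↑y * I)) y := by
  have hz : HasDerivAt (fun t : ℝ => (↑x + ↑t * I : ℂ)) I y := by
    simpa using ((hasDerivAt_ofReal y).mul_const I).const_add (↑x : ℂ)
  simpa [smul_eq_mul, Function.comp_def] using ((hF _).hasDerivAt.scomp y hz)

lemma hasDerivAt_re_comp {G : ℝ → ℂ} {d : ℂ} {t : ℝ} (hG : HasDerivAt G d t) :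
    HasDerivAt (fun s => (G s).re) d.re t := by
  simpa [Function.comp_def] using Complex.reCLM.hasFDerivAt.comp_hasDerivAt t hG

lemma reComp_contDiff {F : ℂ → ℂ} (hF : Differentiable ℂ F) :
    ContDiff ℝ (⊤ : ℕ∞) (fun q : ℝ × ℝ => (F (↑q.1 + ↑q.2 * I)).re) := by
  have h1 : ContDiff ℝ (⊤ : ℕ∞) F := (hF.contDiff (n := (⊤ : ℕ∞))).restrict_scalars ℝ
  have h2 : ContDiff ℝ (⊤ : ℕ∞) (fun q : ℝ × ℝ => (↑q.1 + ↑q.2 * I : ℂ)) :=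
    (Complex.ofRealCLM.contDiff.comp contDiff_fst).add
      ((Complex.ofRealCLM.contDiff.comp contDiff_snd).mul contDiff_const)
  exact Complex.reCLM.contDiff.comp (h1.comp h2)

lemma entire_primitive {h : ℂ → ℂ} (hh : Differentiable ℂ h) :
    ∃ F : ℂ → ℂ, ∀ z : ℂ, HasDerivAt F (h z) z := by
  set c : ℕ → ℂ := fun n => ((Nat.factorial n : ℕ) : ℂ)⁻¹ * iteratedDeriv n h 0 with hc
  have hsum : ∀ z : ℂ, HasSum (fun n => c n * z ^ n) (h z) := by
    intro z
    have := hasSum_taylorSeries_of_entire hh 0 z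
    simp only [sub_zero, smul_eq_mul] at this
    convert this using 2 with n
    · rfl
    ring
  refine ⟨fun z => ∑' n, c n / (n + 1) * z ^ (n + 1), fun y => ?_⟩
  set R : ℝ := ‖y‖ + 1 with hR
  have hR0 : 0 < R := by positivity
  have hs2 : Summable (fun n => c n * (2 * R : ℂ) ^ n) := (hsum _).summable
  have ht : Filter.Tendsto (fun n => ‖c n * (2 * R : ℂ) ^ n‖) atTop (nhds 0) := by
    simpa using hs2.tendsto_atTop_zero.norm
  obtain ⟨C, hC⟩ := ht.bddAbove_range
  simp only [mem_upperBounds, Set.mem_range, forall_exists_index] at hC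
  have hCn : ∀ n, ‖c n‖ * (2 ^ n * R ^ n) ≤ C := by
    intro n
    have h1 : ‖c n * (2 * R : ℂ) ^ n‖ = ‖c n‖ * (2 ^ n * R ^ n) := by
      rw [norm_mul, norm_pow]
      congr 1
      rw [norm_mul, mul_pow]
      simp [Complex.norm_real, abs_of_pos hR0]
    rw [← h1]
    exact hC _ n rfl
  have hu : Summable (fun n => ‖c n‖ * R ^ n) := by
    refine Summable.of_nonneg_of_le (fun n => by positivity) (fun n => ?_)
      (((summable_geometric_of_lt_one (by norm_num) (by norm_num) :
        Summable fun n : ℕ => (1 / 2 : ℝ) ^ n)).mul_left C)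
    have h2 : ‖c n‖ * R ^ n = (‖c n‖ * (2 ^ n * R ^ n)) * (1 / 2) ^ n := by
      rw [one_div, inv_pow]
      field_simp
    rw [h2]
    exact mul_le_mul_of_nonneg_right (hCn n) (by positivity)
  have key := hasDerivAt_tsum_of_isPreconnected (u := fun n => ‖c n‖ * R ^ n) hu
    (isOpen_ball (x := (0 : ℂ)) (ε := R)) (convex_ball (0 : ℂ) R).isPreconnected
    (g := fun n z => c n / (n + 1) * z ^ (n + 1)) (g' := fun n z => c n * z ^ n)
    (fun n z _ => ?_) (fun n z hz => ?_) (mem_ball_self hR0) ?_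
    (mem_ball_zero_iff.mpr (lt_add_one ‖y‖))
  · rw [(hsum y).tsum_eq] at key; exact key
  · have hp := (hasDerivAt_pow (n + 1) z).const_mul (c n / ((n : ℂ) + 1))
    convert hp using 1
    · rfl
    have hn : ((n : ℂ) + 1) ≠ 0 := Nat.cast_add_one_ne_zero n
    push_cast
    field_simp
  · rw [norm_mul, norm_pow]
    exact mul_le_mul_of_nonneg_left
      (pow_le_pow_left₀ (norm_nonneg z) (le_of_lt (mem_ball_zero_iff.mp hz)) n)
      (norm_nonneg _)
  · exact summable_zero.congr fun n => by simp

lemma clm_ext_complex {T S : ℂ →L[ℝ] ℂ} (h1 : T 1 = S 1) (hI : T I = S I) : T = S := by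
  refine ContinuousLinearMap.ext fun w => ?_
  have hw : w = (w.re : ℝ) • (1 : ℂ) + (w.im : ℝ) • I := by
    simp [Complex.real_smul, re_add_im]
  rw [hw, map_add, map_add, map_smul, map_smul, map_smul, map_smul, h1, hI]

lemma cr_entire {u : ℝ × ℝ → ℝ} (hu : ContDiff ℝ (⊤ : ℕ∞) u)
    (hharm : ∀ p, pdx (pdx u) p + pdy (pdy u) p = 0) :
    Differentiable ℂ (fun w : ℂ => (pdx u (w.re, w.im) : ℂ) - (pdy u (w.re, w.im) : ℂ) * I) := by
  have hPc : ContDiff ℝ (⊤ : ℕ∞) (pdx u) := contDiff_pdx hu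
  have hQc : ContDiff ℝ (⊤ : ℕ∞) (pdy u) := contDiff_pdy hu
  intro z
  set p : ℝ × ℝ := (z.re, z.im) with hp
  set a := fderiv ℝ (pdx u) p with ha
  set b := fderiv ℝ (pdy u) p with hb
  set μ : ℂ := (a (1, 0) : ℂ) - (b (1, 0) : ℂ) * I with hμ
  set e : ℂ →L[ℝ] ℝ × ℝ := Complex.equivRealProdCLM.toContinuousLinearMap with he
  have hePQ : HasFDerivAt (fun w : ℂ => (w.re, w.im)) e z :=
    Complex.equivRealProdCLM.hasFDerivAt
  have hP1 : HasFDerivAt (fun w : ℂ => (pdx u (w.re, w.im) : ℂ))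
      (Complex.ofRealCLM.comp (a.comp e)) z :=
    Complex.ofRealCLM.hasFDerivAt.comp z
      (((hPc.differentiable (by simp) p).hasFDerivAt).comp (g := pdx u) z hePQ)
  have hQ1 : HasFDerivAt (fun w : ℂ => (pdy u (w.re, w.im) : ℂ))
      (Complex.ofRealCLM.comp (b.comp e)) z :=
    Complex.ofRealCLM.hasFDerivAt.comp z
      (((hQc.differentiable (by simp) p).hasFDerivAt).comp (g := pdy u) z hePQ)
  have hD := hP1.sub (hQ1.mul_const' I)
  -- identify schwert
  have schwarz : a (0, 1) = b (1, 0) := by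
    rw [ha, hb, fderiv_pdx_apply hu, fderiv_pdy_apply hu, pdv_swap hu]
  have harm : a (1, 0) + b (0, 1) = 0 := by
    have h1 := hharm p
    rwa [pdx_eq ((contDiff_pdx hu).differentiable (by simp) p),
      pdy_eq ((contDiff_pdy hu).differentiable (by simp) p)] at h1
  have hrs : ((μ • (1 : ℂ →L[ℂ] ℂ)).restrictScalars ℝ) =
      Complex.ofRealCLM.comp (a.comp e) -
        (Complex.ofRealCLM.comp (b.comp e)).smulRight I := by
    apply clm_ext_complex
    · simp [he, Complex.equivRealProdCLM_apply, hμ]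
    · simp [he, hμ]
      rw [← schwarz]
      have h1 : b (0, 1) = -a (1, 0) := by linarith
      rw [h1]
      push_cast
      ring_nf
      simp [Complex.I_sq]
  have : HasFDerivAt (fun w : ℂ => (pdx u (w.re, w.im) : ℂ) - (pdy u (w.re, w.im) : ℂ) * I)
      (μ • (1 : ℂ →L[ℂ] ℂ)) z := hasFDerivAt_of_restrictScalars ℝ hD hrs
  exact this.differentiableAt

lemma harm_rep {u : ℝ × ℝ → ℝ} (hu : ContDiff ℝ (⊤ : ℕ∞) u)
    (hharm : ∀ p, pdx (pdx u) p + pdy (pdy u) p = 0) :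
    ∃ F : ℂ → ℂ, Differentiable ℂ F ∧ ∀ p : ℝ × ℝ, u p = (F (↑p.1 + ↑p.2 * I)).re := by
  obtain ⟨F₀, hF₀⟩ := entire_primitive (cr_entire hu hharm)
  have hF₀d : Differentiable ℂ F₀ := fun z => (hF₀ z).differentiableAt
  have hderiv : ∀ z, deriv F₀ z =
      (pdx u (z.re, z.im) : ℂ) - (pdy u (z.re, z.im) : ℂ) * I := fun z => (hF₀ z).deriv
  set G : ℝ × ℝ → ℝ := fun q => u q - (F₀ (↑q.1 + ↑q.2 * I)).re with hG
  have hGd : Differentiable ℝ G :=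
    (hu.differentiable (by simp)).sub ((reComp_contDiff hF₀d).differentiable (by simp))
  have hG0 : ∀ q, fderiv ℝ G q = 0 := by
    intro q
    have hx : pdx G q = 0 := by
      have hz : HasDerivAt (fun t => G (t, q.2))
          (fderiv ℝ u q (1, 0) - (deriv F₀ (↑q.1 + ↑q.2 * I)).re) q.1 :=
        (hasDerivAt_slice_x ((hu.differentiable (by simp)) q)).sub
          (hasDerivAt_re_comp (sliceX_hasDerivAt hF₀d q.1 q.2))
      have h2 := hz.deriv
      show deriv (fun t => G (t, q.2)) q.1 = 0
      rw [h2, hderiv, ← pdx_eq ((hu.differentiable (by simp)) q)]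
      simp
    have hy : pdy G q = 0 := by
      have hz : HasDerivAt (fun t => G (q.1, t))
          (fderiv ℝ u q (0, 1) - (I * deriv F₀ (↑q.1 + ↑q.2 * I)).re) q.2 :=
        (hasDerivAt_slice_y ((hu.differentiable (by simp)) q)).sub
          (hasDerivAt_re_comp (sliceY_hasDerivAt hF₀d q.1 q.2))
      have h2 := hz.deriv
      show deriv (fun t => G (q.1, t)) q.2 = 0
      rw [h2, hderiv, ← pdy_eq ((hu.differentiable (by simp)) q)]
      simp
    refine ContinuousLinearMap.ext fun v => ?_
    have hv : v = v.1 • ((1 : ℝ), (0 : ℝ)) + v.2 • ((0 : ℝ), (1 : ℝ)) := by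
      simp [Prod.ext_iff]
    rw [hv, map_add, map_smul, map_smul, ← pdx_eq (hGd q), ← pdy_eq (hGd q), hx, hy]
    simp
  have hconst := is_const_of_fderiv_eq_zero hGd hG0
  refine ⟨fun z => F₀ z + ((G (0, 0) : ℝ) : ℂ), hF₀d.add_const _, fun p => ?_⟩
  have hcp := hconst p (0, 0)
  simp only [Complex.add_re, Complex.ofReal_re]
  have : G p = G (0, 0) := hcp
  rw [hG] at this
  simp only at this
  simp only [hG]
  linarith

lemma sliceX' {F F' : ℂ → ℂ} (h : ∀ z, HasDerivAt F (F' z) z) (x y : ℝ) :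
    HasDerivAt (fun t : ℝ => F (↑t + ↑y * I)) (F' (↑x + ↑y * I)) x := by
  have hz : HasDerivAt (fun t : ℝ => (↑t + ↑y * I : ℂ)) 1 x :=
    (hasDerivAt_ofReal x).add_const _
  simpa [Function.comp_def] using (h _).scomp x hz

lemma sliceY' {F F' : ℂ → ℂ} (h : ∀ z, HasDerivAt F (F' z) z) (x y : ℝ) :
    HasDerivAt (fun t : ℝ => F (↑x + ↑t * I)) (I * F' (↑x + ↑y * I)) y := by
  have hz : HasDerivAt (fun t : ℝ => (↑x + ↑t * I : ℂ)) I y := by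
    simpa using ((hasDerivAt_ofReal y).mul_const I).const_add (↑x : ℂ)
  simpa [smul_eq_mul, Function.comp_def] using (h _).scomp y hz

lemma hconjX (x y : ℝ) :
    HasDerivAt (fun t : ℝ => (starRingEnd ℂ) (↑t + ↑y * I)) 1 x := by
  have he : (fun t : ℝ => (starRingEnd ℂ) (↑t + ↑y * I)) = fun t : ℝ => (↑t - ↑y * I : ℂ) := by
    funext t; simp [Complex.ext_iff]
  rw [he]
  exact (hasDerivAt_ofReal x).sub_const _

lemma hconjY (x y : ℝ) :
    HasDerivAt (fun t : ℝ => (starRingEnd ℂ) (↑x + ↑t * I)) (-I) y := by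
  have he : (fun t : ℝ => (starRingEnd ℂ) (↑x + ↑t * I)) = fun t : ℝ => (↑x - ↑t * I : ℂ) := by
    funext t; simp [Complex.ext_iff]
  rw [he]
  simpa using ((hasDerivAt_ofReal y).mul_const I).const_sub (↑x : ℂ)

lemma lap_conj_mul {φ φ' φ'' : ℂ → ℂ} (h1 : ∀ z, HasDerivAt φ (φ' z) z)
    (h2 : ∀ z, HasDerivAt φ' (φ'' z) z) (p : ℝ × ℝ) :
    lap (fun q => ((starRingEnd ℂ) (↑q.1 + ↑q.2 * I) * φ (↑q.1 + ↑q.2 * I)).re) p =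
      (4 * φ' (↑p.1 + ↑p.2 * I)).re := by
  set Φ : ℝ × ℝ → ℝ := fun q => ((starRingEnd ℂ) (↑q.1 + ↑q.2 * I) * φ (↑q.1 + ↑q.2 * I)).re
    with hΦ
  have step1 : pdx Φ = fun q =>
      (φ (↑q.1 + ↑q.2 * I) + (starRingEnd ℂ) (↑q.1 + ↑q.2 * I) * φ' (↑q.1 + ↑q.2 * I)).re := by
    funext q
    have h := hasDerivAt_re_comp ((hconjX q.1 q.2).mul (sliceX' h1 q.1 q.2))
    have := h.deriv
    show deriv (fun t => Φ (t, q.2)) q.1 = _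
    erw [this]
    simp
  have step3 : pdy Φ = fun q =>
      ((-I) * φ (↑q.1 + ↑q.2 * I) +
        (starRingEnd ℂ) (↑q.1 + ↑q.2 * I) * (I * φ' (↑q.1 + ↑q.2 * I))).re := by
    funext q
    have h := hasDerivAt_re_comp ((hconjY q.1 q.2).mul (sliceY' h1 q.1 q.2))
    have := h.deriv
    show deriv (fun t => Φ (q.1, t)) q.2 = _
    erw [this]
  have step2 : pdx (pdx Φ) p =
      (φ' (↑p.1 + ↑p.2 * I) + (φ' (↑p.1 + ↑p.2 * I) +
        (starRingEnd ℂ) (↑p.1 + ↑p.2 * I) * φ'' (↑p.1 + ↑p.2 * I))).re := by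
    rw [step1]
    have h := hasDerivAt_re_comp ((sliceX' h1 p.1 p.2).add
      ((hconjX p.1 p.2).mul (sliceX' h2 p.1 p.2)))
    have hd := h.deriv
    show deriv (fun t => _) p.1 = _
    erw [hd]
    simp
  have step4 : pdy (pdy Φ) p =
      ((-I) * (I * φ' (↑p.1 + ↑p.2 * I)) + ((-I) * (I * φ' (↑p.1 + ↑p.2 * I)) +
        (starRingEnd ℂ) (↑p.1 + ↑p.2 * I) * (I * (I * φ'' (↑p.1 + ↑p.2 * I))))).re := by
    rw [step3]
    have h := hasDerivAt_re_comp (((sliceY' h1 p.1 p.2).const_mul (-I)).add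
      ((hconjY p.1 p.2).mul ((sliceY' h2 p.1 p.2).const_mul I)))
    have hd := h.deriv
    show deriv (fun t => _) p.2 = _
    erw [hd]
  show pdx (pdx Φ) p + pdy (pdy Φ) p = _
  rw [step2, step4, ← Complex.add_re]
  congr 1
  have hI : (I : ℂ) * I = -1 := Complex.I_mul_I
  ring_nf
  rw [Complex.I_sq]
  ring

lemma pdx_sub {f g : ℝ × ℝ → ℝ} (hf : Differentiable ℝ f) (hg : Differentiable ℝ g) :
    pdx (fun q => f q - g q) = fun q => pdx f q - pdx g q := by
  funext q
  have h := ((hasDerivAt_slice_x (hf q)).sub (hasDerivAt_slice_x (hg q))).deriv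
  show deriv (fun t => f (t, q.2) - g (t, q.2)) q.1 = _
  erw [h, ← pdx_eq (hf q), ← pdx_eq (hg q)]

lemma pdy_sub {f g : ℝ × ℝ → ℝ} (hf : Differentiable ℝ f) (hg : Differentiable ℝ g) :
    pdy (fun q => f q - g q) = fun q => pdy f q - pdy g q := by
  funext q
  have h := ((hasDerivAt_slice_y (hf q)).sub (hasDerivAt_slice_y (hg q))).deriv
  show deriv (fun t => f (q.1, t) - g (q.1, t)) q.2 = _
  erw [h, ← pdy_eq (hf q), ← pdy_eq (hg q)]

lemma lap_sub {f g : ℝ × ℝ → ℝ} (hf : ContDiff ℝ (⊤ : ℕ∞) f) (hg : ContDiff ℝ (⊤ : ℕ∞) g) (p : ℝ × ℝ) :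
    lap (fun q => f q - g q) p = lap f p - lap g p := by
  show pdx (pdx _) p + pdy (pdy _) p = (pdx (pdx f) p + pdy (pdy f) p) - _
  rw [pdx_sub (hf.differentiable (by simp)) (hg.differentiable (by simp)),
    pdy_sub (hf.differentiable (by simp)) (hg.differentiable (by simp)),
    pdx_sub ((contDiff_pdx hf).differentiable (by simp)) ((contDiff_pdx hg).differentiable (by simp)),
    pdy_sub ((contDiff_pdy hf).differentiable (by simp)) ((contDiff_pdy hg).differentiable (by simp))]
  simp only [lap]
  ring

lemma conjMul_contDiff {φ : ℂ → ℂ} (hφ : Differentiable ℂ φ) :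
    ContDiff ℝ (⊤ : ℕ∞) (fun q : ℝ × ℝ =>
      ((starRingEnd ℂ) (↑q.1 + ↑q.2 * I) * φ (↑q.1 + ↑q.2 * I)).re) := by
  have hz : ContDiff ℝ (⊤ : ℕ∞) (fun q : ℝ × ℝ => (↑q.1 + ↑q.2 * I : ℂ)) :=
    (Complex.ofRealCLM.contDiff.comp contDiff_fst).add
      ((Complex.ofRealCLM.contDiff.comp contDiff_snd).mul contDiff_const)
  have h1 : ContDiff ℝ (⊤ : ℕ∞) φ := (hφ.contDiff (n := (⊤ : ℕ∞))).restrict_scalars ℝ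
  exact Complex.reCLM.contDiff.comp
    ((Complex.conjCLE.contDiff.comp hz).mul (h1.comp hz))


theorem stmt_11 (w : ℝ × ℝ → ℝ) (hw : ContDiff ℝ (⊤ : ℕ∞) w)
    (hbih : ∀ p : ℝ × ℝ, lap (lap w) p = 0) :
    ∃ f g : ℂ → ℂ, Differentiable ℂ f ∧ Differentiable ℂ g ∧
      ∀ p : ℝ × ℝ, w p =
        ((starRingEnd ℂ) (p.1 + p.2 * Complex.I) * f (p.1 + p.2 * Complex.I)
          + g (p.1 + p.2 * Complex.I)).re := by
  have hlapw : ContDiff ℝ (⊤ : ℕ∞) (lap w) :=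
    (contDiff_pdx (contDiff_pdx hw)).add (contDiff_pdy (contDiff_pdy hw))
  obtain ⟨H, hHd, hHrep⟩ := harm_rep hlapw hbih
  obtain ⟨H₁, hH₁⟩ := entire_primitive hHd
  have hH₁d : Differentiable ℂ H₁ := fun z => (hH₁ z).differentiableAt
  set φ : ℂ → ℂ := fun z => H₁ z / 4 with hφdef
  have hφd : Differentiable ℂ φ := hH₁d.div_const 4
  have h1 : ∀ z, HasDerivAt φ (H z / 4) z := fun z => (hH₁ z).div_const 4
  have h2 : ∀ z, HasDerivAt (fun z => H z / 4) (deriv H z / 4) z := fun z =>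
    ((hHd z).hasDerivAt).div_const 4
  set Φ : ℝ × ℝ → ℝ :=
    fun q => ((starRingEnd ℂ) (↑q.1 + ↑q.2 * I) * φ (↑q.1 + ↑q.2 * I)).re with hΦdef
  have hΦc : ContDiff ℝ (⊤ : ℕ∞) Φ := conjMul_contDiff hφd
  have hlapΦ : ∀ p, lap Φ p = lap w p := by
    intro p
    have hcm := lap_conj_mul h1 h2 p
    rw [hΦdef, hcm, hHrep p]
    congr 1
    ring
  set u₂ : ℝ × ℝ → ℝ := fun q => w q - Φ q with hu₂
  have hu₂c : ContDiff ℝ (⊤ : ℕ∞) u₂ := hw.sub hΦc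
  have hu₂harm : ∀ p, pdx (pdx u₂) p + pdy (pdy u₂) p = 0 := by
    intro p
    have hls := lap_sub hw hΦc p
    show lap u₂ p = 0
    rw [hu₂, hls, hlapΦ p]
    ring
  obtain ⟨g₀, hg₀d, hg₀rep⟩ := harm_rep hu₂c hu₂harm
  refine ⟨φ, g₀, hφd, hg₀d, fun p => ?_⟩
  rw [Complex.add_re]
  have e1 := hg₀rep p
  simp only [hu₂] at e1
  have e2 : Φ p = ((starRingEnd ℂ) (↑p.1 + ↑p.2 * I) * φ (↑p.1 + ↑p.2 * I)).re := by
    rw [hΦdef]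
  linarith [e1, e2]
end

section
/- Let c₂, c₄ be real constants with (c₂, c₄) ≠ (0, 0), and define f : ℝ → ℝ by f(x) = x·(c₂·e^{x/√2} + c₄·e^{−x/√2}). Then f satisfies f''''(x) − f''(x) + (1/4)·f(x) = 0 for all x ∈ ℝ, but f does not satisfy the equation f''(x) = (1/2)·f(x) for all x: there exists x ∈ ℝ with f''(x) ≠ (1/2)·f(x). -/
/-!
The operator is `(D² - 1/2)²`, whose kernel is spanned by `e^{±x/√2}` and `x e^{±x/√2}`;
this span is closed under `D`, so both identities are coefficient computations in it.
Moreover `(D² - 1/2) f = √2 (c₂ e^{x/√2} - c₄ e^{-x/√2})`, which vanishes identically only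
when `c₂ = c₄ = 0`.
-/

open Real

noncomputable def expPoly (a p q r s : ℝ) (x : ℝ) : ℝ :=
  (p + q * x) * exp (a * x) + (r + s * x) * exp (-(a * x))

theorem hasDerivAt_expPoly (a p q r s x : ℝ) :
    HasDerivAt (expPoly a p q r s) (expPoly a (q + a * p) (a * q) (s - a * r) (-(a * s)) x) x := by
  have hE : HasDerivAt (fun y => exp (a * y)) (exp (a * x) * a) x := by
    simpa using ((hasDerivAt_id x).const_mul a).exp
  have hF : HasDerivAt (fun y => exp (-(a * y))) (exp (-(a * x)) * -a) x := by
    simpa using ((hasDerivAt_id x).const_mul a).neg.exp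
  have hP : HasDerivAt (fun y => p + q * y) q x := by
    simpa using ((hasDerivAt_id x).const_mul q).const_add p
  have hR : HasDerivAt (fun y => r + s * y) s x := by
    simpa using ((hasDerivAt_id x).const_mul s).const_add r
  refine ((hP.mul hE).add (hR.mul hF)).congr_deriv ?_
  simp only [expPoly]
  ring

theorem deriv_expPoly (a p q r s : ℝ) :
    deriv (expPoly a p q r s) = expPoly a (q + a * p) (a * q) (s - a * r) (-(a * s)) :=
  funext fun x => (hasDerivAt_expPoly a p q r s x).deriv

theorem iteratedDeriv_four_sub_expPoly (a p q r s x : ℝ) :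
    iteratedDeriv 4 (expPoly a p q r s) x - 2 * a ^ 2 * iteratedDeriv 2 (expPoly a p q r s) x
      + a ^ 4 * expPoly a p q r s x = 0 := by
  simp only [iteratedDeriv_succ, iteratedDeriv_zero, deriv_expPoly, expPoly]
  ring

theorem iteratedDeriv_two_sub_expPoly (a p q r s x : ℝ) :
    iteratedDeriv 2 (expPoly a p q r s) x - a ^ 2 * expPoly a p q r s x
      = 2 * a * (q * exp (a * x) - s * exp (-(a * x))) := by
  simp only [iteratedDeriv_succ, iteratedDeriv_zero, deriv_expPoly, expPoly]
  ring

theorem exists_mul_exp_ne {a : ℝ} (ha : a ≠ 0) {c d : ℝ} (hcd : (c, d) ≠ (0, 0)) :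
    ∃ x, c * exp (a * x) ≠ d * exp (-(a * x)) := by
  by_cases hc : c = d
  · subst hc
    have hc0 : c ≠ 0 := fun h => hcd (by simp [h])
    refine ⟨1, fun h => ha ?_⟩
    have := exp_injective (mul_left_cancel₀ hc0 h)
    linarith
  · exact ⟨0, by simpa using hc⟩

theorem stmt_14 (c₂ c₄ : ℝ) (hc : (c₂, c₄) ≠ (0, 0)) (f : ℝ → ℝ)
    (hf : f = fun x =>
      x * (c₂ * Real.exp (x / Real.sqrt 2) + c₄ * Real.exp (-x / Real.sqrt 2))) :
    (∀ x : ℝ, iteratedDeriv 4 f x - iteratedDeriv 2 f x + (1 / 4) * f x = 0) ∧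
    (∃ x : ℝ, iteratedDeriv 2 f x ≠ (1 / 2) * f x) := by
  set a := (√2)⁻¹ with ha_def
  have ha : a ≠ 0 := by positivity
  have ha2 : a ^ 2 = 1 / 2 := by rw [inv_pow, sq_sqrt zero_le_two, one_div]
  have hf' : f = expPoly a 0 c₂ 0 c₄ := by
    funext x
    simp only [hf, expPoly, ha_def, div_eq_inv_mul, mul_neg]
    ring
  subst hf'
  refine ⟨fun x => ?_, ?_⟩
  · have h := iteratedDeriv_four_sub_expPoly a 0 c₂ 0 c₄ x
    rw [show a ^ 4 = (a ^ 2) ^ 2 by ring, ha2] at h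
    linarith
  · obtain ⟨x, hx⟩ := exists_mul_exp_ne ha hc
    refine ⟨x, fun h => hx ?_⟩
    have h2 := iteratedDeriv_two_sub_expPoly a 0 c₂ 0 c₄ x
    rw [ha2, h, sub_self] at h2
    have := (mul_eq_zero.1 h2.symm).resolve_left (by positivity)
    linarith
end

section
/- Let n ≥ 2 be a natural number, c ≠ 0 a real constant, and set α₊ = (n − 1 + √((n−1)(n+3)))/2. Then the function f : (0, ∞) → ℝ, f(y) = y^{α₊}, satisfies the Euler equation y²·f''(y) − (n−2)·y·f'(y) − (n−1)·f(y) = 0 for all y > 0, but does NOT satisfy the fourth-order equation y⁴·f''''(y) + (8−2n)·y³·f'''(y) + (n−8)(n−2)·y²·f''(y) + (n−2)(3n−4)·y·f'(y) + (n−1)²·f(y) = −2c²(n−1)²·f(y)³ for all y > 0; that is, there exists y > 0 at which this fourth-order equation fails. -/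
/-!
On `y ^ r` the operator `y ^ k (d/dy) ^ k` acts as multiplication by the falling factorial
`r (r - 1) ⋯ (r - k + 1)`. Hence the Euler operator acts by its indicial polynomial
`Q(r) = r² - (n - 1) r - (n - 1)` and the linear fourth-order operator by `Q(r)²`. Since `α₊` is
the larger root of `Q`, both linear parts vanish on `y ^ α₊`, whereas the cubic term
`-2 c² (n - 1)² y ^ (3 α₊)` does not.
-/

open Real Polynomial

lemma pow_mul_iteratedDeriv_rpow_const {y : ℝ} (hy : 0 < y) (r : ℝ) (k : ℕ) :
    y ^ k * iteratedDeriv k (fun x : ℝ => x ^ r) y = (descPochhammer ℝ k).eval r * y ^ r := by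
  rw [iteratedDeriv_eq_iterate, iter_deriv_rpow_const, mul_left_comm, ← rpow_natCast,
    ← rpow_add hy, add_sub_cancel]

lemma euler_operator_rpow_const {y : ℝ} (hy : 0 < y) (n r : ℝ) :
    y ^ 2 * iteratedDeriv 2 (fun x : ℝ => x ^ r) y - (n - 2) * y * deriv (fun x : ℝ => x ^ r) y
      - (n - 1) * y ^ r = (r ^ 2 - (n - 1) * r - (n - 1)) * y ^ r := by
  have h1 := pow_mul_iteratedDeriv_rpow_const hy r 1
  have h2 := pow_mul_iteratedDeriv_rpow_const hy r 2
  simp only [pow_one, iteratedDeriv_one, descPochhammer_succ_right, descPochhammer_zero, eval_mul,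
    eval_sub, eval_X, eval_natCast, eval_one] at h1 h2
  linear_combination h2 - (n - 2) * h1

lemma biharmonic_operator_rpow_const {y : ℝ} (hy : 0 < y) (n r : ℝ) :
    y ^ 4 * iteratedDeriv 4 (fun x : ℝ => x ^ r) y
      + (8 - 2 * n) * y ^ 3 * iteratedDeriv 3 (fun x : ℝ => x ^ r) y
      + (n - 8) * (n - 2) * y ^ 2 * iteratedDeriv 2 (fun x : ℝ => x ^ r) y
      + (n - 2) * (3 * n - 4) * y * deriv (fun x : ℝ => x ^ r) y + (n - 1) ^ 2 * y ^ r
      = (r ^ 2 - (n - 1) * r - (n - 1)) ^ 2 * y ^ r := by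
  have h1 := pow_mul_iteratedDeriv_rpow_const hy r 1
  have h2 := pow_mul_iteratedDeriv_rpow_const hy r 2
  have h3 := pow_mul_iteratedDeriv_rpow_const hy r 3
  have h4 := pow_mul_iteratedDeriv_rpow_const hy r 4
  simp only [pow_one, iteratedDeriv_one, descPochhammer_succ_right, descPochhammer_zero, eval_mul,
    eval_sub, eval_X, eval_natCast, eval_one] at h1 h2 h3 h4
  linear_combination h4 + (8 - 2 * n) * h3 + (n - 8) * (n - 2) * h2 + (n - 2) * (3 * n - 4) * h1

noncomputable def alphaPlus (n : ℝ) : ℝ := (n - 1 + √((n - 1) * (n + 3))) / 2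

lemma alphaPlus_sq_sub {n : ℝ} (hn : 0 ≤ (n - 1) * (n + 3)) :
    alphaPlus n ^ 2 - (n - 1) * alphaPlus n - (n - 1) = 0 := by
  unfold alphaPlus
  linear_combination (1 / 4 : ℝ) * sq_sqrt hn

theorem stmt_17 (n : ℕ) (hn : 2 ≤ n) (c : ℝ) (hc : c ≠ 0) (f : ℝ → ℝ)
    (hf : f = fun y : ℝ =>
      y ^ (((n : ℝ) - 1 + Real.sqrt (((n : ℝ) - 1) * ((n : ℝ) + 3))) / 2)) :
    (∀ y : ℝ, 0 < y →
        y ^ 2 * iteratedDeriv 2 f y - ((n : ℝ) - 2) * y * deriv f y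
          - ((n : ℝ) - 1) * f y = 0) ∧
    (∃ y : ℝ, 0 < y ∧
        y ^ 4 * iteratedDeriv 4 f y + (8 - 2 * (n : ℝ)) * y ^ 3 * iteratedDeriv 3 f y
          + ((n : ℝ) - 8) * ((n : ℝ) - 2) * y ^ 2 * iteratedDeriv 2 f y
          + ((n : ℝ) - 2) * (3 * (n : ℝ) - 4) * y * deriv f y
          + ((n : ℝ) - 1) ^ 2 * f y
          ≠ -2 * c ^ 2 * ((n : ℝ) - 1) ^ 2 * (f y) ^ 3) := by
  have hn_real : (1 : ℝ) < n := by exact_mod_cast hn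
  have hf : f = fun y : ℝ => y ^ alphaPlus n := hf
  have hroot := alphaPlus_sq_sub (n := n) (by nlinarith)
  subst hf
  refine ⟨fun y hy => ?_, 1, one_pos, ?_⟩
  · rw [euler_operator_rpow_const hy, hroot, zero_mul]
  · rw [biharmonic_operator_rpow_const one_pos, hroot, one_rpow]
    have hn_sub : (n - 1 : ℝ) ≠ 0 := by linarith
    simpa using ⟨hc, hn_sub⟩
end
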